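/- Let H₁, H₁′, Hₐ, Hₐ′, H₂, H₂′ be subspaces of E satisfying the transpose interval relations Hₐ′ = H₁′⊔Hₐ, H₁ = H₁′⊓Hₐ, H₂′ = Hₐ′⊔H₂, and Hₐ = Hₐ′⊓H₂ (i.e. [H₁,H₁′] ≺ₜᵣ [Hₐ,Hₐ′] ≺ₜᵣ [H₂,H₂′]). Then 𝔇(H₁′,Hₐ) + 𝔇(Hₐ′,H₂) = 𝔇(H₁′,H₂). -/

import Mathlib

variable {E : Type*} [NormedAddCommGroup E] [InnerProductSpace ℂ E] [FiniteDimensional ℂ E]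

/-- The orthogonal projection onto a subspace `K`, regarded as an operator on `E`. -/
noncomputable def proj (K : Submodule ℂ E) : E →L[ℂ] E :=
  K.subtypeL.comp (Submodule.orthogonalProjectionOnto K)

/-- The Möbius (non-additivity) operator `𝔇(H₁,H₂)`. -/
noncomputable def MobD (H₁ H₂ : Submodule ℂ E) : E →L[ℂ] E :=
  proj (H₁ ⊔ H₂) + proj (H₁ ⊓ H₂) - proj H₁ - proj H₂

/-! Once `Hₐ'` is eliminated as `H₁' ⊔ Hₐ`, the relation `Hₐ = Hₐ' ⊓ H₂` forces
`Hₐ' ⊔ H₂ = H₁' ⊔ H₂` and `H₁' ⊓ Hₐ = H₁' ⊓ H₂`, and these hold in any lattice. In the sum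
`𝔇(H₁',Hₐ) + 𝔇(Hₐ',H₂)` the projections onto `Hₐ` and `Hₐ'` then cancel, leaving `𝔇(H₁',H₂)`. -/

section Lattice

variable {α : Type*} [Lattice α] {a b c : α}

theorem sup_sup_eq_sup_of_sup_inf_eq (h : (a ⊔ b) ⊓ c = b) : a ⊔ b ⊔ c = a ⊔ c := by
  have hbc : b ≤ c := h ▸ inf_le_right
  rw [sup_assoc, sup_eq_right.mpr hbc]

theorem inf_eq_inf_of_sup_inf_eq (h : (a ⊔ b) ⊓ c = b) : a ⊓ b = a ⊓ c := by
  have hbc : b ≤ c := h ▸ inf_le_right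
  refine le_antisymm (inf_le_inf_left a hbc) (le_inf inf_le_left ?_)
  exact h ▸ inf_le_inf_right c le_sup_left

end Lattice

theorem mobD_add_mobD_sup_of_sup_inf_eq {A B C : Submodule ℂ E} (h : (A ⊔ B) ⊓ C = B) :
    MobD A B + MobD (A ⊔ B) C = MobD A C := by
  unfold MobD
  rw [h, sup_sup_eq_sup_of_sup_inf_eq h, inf_eq_inf_of_sup_inf_eq h]
  abel

theorem mobD_add_mobD_of_transpose_general (H₁' Ha Ha' H₂ : Submodule ℂ E)
    (h1 : Ha' = H₁' ⊔ Ha) (h4 : Ha = Ha' ⊓ H₂) :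
    MobD H₁' Ha + MobD Ha' H₂ = MobD H₁' H₂ := by
  subst h1
  exact mobD_add_mobD_sup_of_sup_inf_eq h4.symm

theorem mobD_add_mobD_of_transpose (H₁ H₁' Ha Ha' H₂ H₂' : Submodule ℂ E)
    (h1 : Ha' = H₁' ⊔ Ha) (h2 : H₁ = H₁' ⊓ Ha)
    (h3 : H₂' = Ha' ⊔ H₂) (h4 : Ha = Ha' ⊓ H₂) :
    MobD H₁' Ha + MobD Ha' H₂ = MobD H₁' H₂ :=
  mobD_add_mobD_of_transpose_general H₁' Ha Ha' H₂ h1 h4
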